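/- arXiv:1104.3892 — 3 statements merged into one kernel-verified Lean document; each statement's English description precedes it below -/
import Mathlib

section
/- Let χ : ℝ → [0,1] be a cutoff function with parameter a ∈ (0,1] and let ρ ∈ (0,a). Then for every x ≥ 0 and every n ∈ ℕ one has 1_{{0}}(x) + Σ_{j=n}^∞ ( 1_{[aρ^{j+1},∞)}(x) · χ(x/ρ^j) )² ≥ χ(x/ρ^n)², where the sum (all of whose terms are nonnegative, and all but finitely many of which vanish when x > 0) is taken in [0,∞]. -/
open scoped ENNReal

open Set Filter

/-- Since `a ρ ^ m → 0`, the shells `[a ρ ^ (j + 1), a ρ ^ j)` for `j > n`, together with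
`[a ρ ^ (n + 1), ∞)`, cover `(0, ∞)`. -/
lemma exists_pow_mul_le_and_lt_of_pos {a ρ x : ℝ} (hρ0 : 0 ≤ ρ) (hρ1 : ρ < 1) (hx : 0 < x)
    (n : ℕ) : ∃ k : ℕ, a * ρ ^ (n + k + 1) ≤ x ∧ (k = 0 ∨ x < a * ρ ^ (n + k)) := by
  have hlim : Tendsto (fun m => a * ρ ^ m) atTop (nhds 0) := by
    simpa using (tendsto_pow_atTop_nhds_zero_of_lt_one hρ0 hρ1).const_mul a
  obtain ⟨N, hN⟩ := eventually_atTop.mp (hlim.eventually (gt_mem_nhds hx))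
  have hex : ∃ k : ℕ, a * ρ ^ (n + k + 1) ≤ x := ⟨N, (hN _ (by omega)).le⟩
  refine ⟨Nat.find hex, Nat.find_spec hex, ?_⟩
  rcases Nat.eq_zero_or_pos (Nat.find hex) with h0 | hpos
  · exact .inl h0
  · have hmin := Nat.find_min hex (Nat.sub_one_lt_of_lt hpos)
    rw [not_le, show n + (Nat.find hex - 1) + 1 = n + Nat.find hex by omega] at hmin
    exact .inr hmin

lemma cutoff_div_pow_eq_one {χ : ℝ → ℝ} {a ρ x : ℝ} (hχ_one : ∀ y ∈ Icc 0 a, χ y = 1)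
    (hρ : 0 < ρ) (hx : 0 ≤ x) {m : ℕ} (h : x ≤ a * ρ ^ m) : χ (x / ρ ^ m) = 1 :=
  hχ_one _ ⟨by positivity, (div_le_iff₀ (by positivity)).mpr h⟩

theorem spectral_partition_inequality_general
    (χ : ℝ → ℝ) (a : ℝ)
    (hχ_range : ∀ x, χ x ∈ Set.Icc (0 : ℝ) 1)
    (hχ_one : ∀ x ∈ Set.Icc (0 : ℝ) a, χ x = 1)
    (ha1 : a ≤ 1)
    (ρ : ℝ) (hρ : 0 < ρ) (hρa : ρ < a)
    (x : ℝ) (hx : 0 ≤ x) (n : ℕ) :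
    ENNReal.ofReal (χ (x / ρ ^ n) ^ 2) ≤
      Set.indicator ({0} : Set ℝ) (fun _ => (1 : ℝ≥0∞)) x +
        ∑' k : ℕ,
          ENNReal.ofReal
            ((Set.indicator (Set.Ici (a * ρ ^ (n + k + 1))) (fun _ => (1 : ℝ)) x *
                χ (x / ρ ^ (n + k))) ^ 2) := by
  have hsq_le_one : ENNReal.ofReal (χ (x / ρ ^ n) ^ 2) ≤ 1 :=
    ENNReal.ofReal_le_one.mpr (pow_le_one₀ (hχ_range _).1 (hχ_range _).2)
  rcases hx.eq_or_lt with rfl | hpos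
  · simpa using hsq_le_one.trans le_self_add
  obtain ⟨k, hk, hk_min⟩ :=
    exists_pow_mul_le_and_lt_of_pos hρ.le (hρa.trans_le ha1) hpos (a := a) n
  refine le_trans ?_ ((ENNReal.le_tsum k).trans le_add_self)
  rw [indicator_of_mem (mem_Ici.mpr hk), one_mul]
  rcases hk_min with rfl | hlt
  · rfl
  · rwa [cutoff_div_pow_eq_one hχ_one hρ hx hlt.le, one_pow, ENNReal.ofReal_one]

/-- **Spectral partition inequality** (equation (4) of Hasler–Herbst,
"Uniqueness of the ground state in the Feshbach renormalization analysis").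

Let `χ : ℝ → [0,1]` be a cutoff function with parameter `a ∈ (0,1]`, i.e. a Borel
function that is nonincreasing on `[0,∞)`, equal to `1` on `[0,a]` and to `0` on
`[1,∞)`, and let `ρ ∈ (0,a)`.  Then for every `x ≥ 0` and every `n ∈ ℕ`,

`1_{{0}}(x) + Σ_{j=n}^∞ (1_{[aρ^{j+1},∞)}(x) · χ(x/ρ^j))² ≥ χ(x/ρ^n)²`,

where the sum (reindexed by `j = n + k`, `k ∈ ℕ`) is taken in `[0,∞]`. -/
theorem spectral_partition_inequality
    (χ : ℝ → ℝ) (a : ℝ)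
    (hχ_meas : Measurable χ)
    (hχ_range : ∀ x, χ x ∈ Set.Icc (0 : ℝ) 1)
    (hχ_anti : AntitoneOn χ (Set.Ici (0 : ℝ)))
    (hχ_one : ∀ x ∈ Set.Icc (0 : ℝ) a, χ x = 1)
    (hχ_zero : ∀ x : ℝ, 1 ≤ x → χ x = 0)
    (ha : 0 < a) (ha1 : a ≤ 1)
    (ρ : ℝ) (hρ : 0 < ρ) (hρa : ρ < a)
    (x : ℝ) (hx : 0 ≤ x) (n : ℕ) :
    ENNReal.ofReal (χ (x / ρ ^ n) ^ 2) ≤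
      Set.indicator ({0} : Set ℝ) (fun _ => (1 : ℝ≥0∞)) x +
        ∑' k : ℕ,
          ENNReal.ofReal
            ((Set.indicator (Set.Ici (a * ρ ^ (n + k + 1))) (fun _ => (1 : ℝ)) x *
                χ (x / ρ ^ (n + k))) ^ 2) :=
  spectral_partition_inequality_general χ a hχ_range hχ_one ha1 ρ hρ hρa x hx n
end

section
/- Let (X,μ) be a measure space, f : X → [0,∞) a measurable function, χ : ℝ → [0,1] a cutoff function with parameter a ∈ (0,1], and ρ ∈ (0,a). Let ψ ∈ L²(μ;ℂ) satisfy ψ = 0 μ-almost everywhere on the set f⁻¹({0}). Then for every n ∈ ℕ, (aρ)² · ∫ χ(f(x)/ρ^n)² |ψ(x)|² dμ(x) ≤ Σ_{j=n}^∞ ρ^{-2j} ∫ f(x)² χ(f(x)/ρ^j)² |ψ(x)|² dμ(x), where both sides are taken in [0,∞]. -/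
/-! Fix `x` with `f x > 0` and put `s = f x / ρⁿ`. If `s > a`, the term `j = n` already
dominates pointwise, since `aρ < s`. Otherwise the scales `s / ρᵏ` increase geometrically with ratio
`1/ρ`, so one of them lands in `(aρ, a]`; there `χ = 1`, and that single term dominates
`(aρ)² χ(s)² ≤ (aρ)²`. Summing the pointwise bound over `k` and integrating gives the claim;
on `f = 0` the left integrand vanishes because `ψ` does. -/

open MeasureTheory
open scoped ENNReal

theorem const_mul_lintegral_le_tsum_const_mul_lintegral {X : Type*} [MeasurableSpace X]
    {μ : Measure X} {c : ℝ≥0∞} {F : X → ℝ≥0∞} {d : ℕ → ℝ≥0∞} {g : ℕ → X → ℝ≥0∞}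
    (hg : ∀ k, AEMeasurable (g k) μ) (h : ∀ᵐ x ∂μ, ∃ k, c * F x ≤ d k * g k x) :
    c * ∫⁻ x, F x ∂μ ≤ ∑' k, d k * ∫⁻ x, g k x ∂μ :=
  calc c * ∫⁻ x, F x ∂μ ≤ ∫⁻ x, c * F x ∂μ := lintegral_const_mul_le c F
    _ ≤ ∫⁻ x, ∑' k, d k * g k x ∂μ :=
      lintegral_mono_ae <| h.mono fun _ ⟨k, hk⟩ => hk.trans (ENNReal.le_tsum k)
    _ = ∑' k, ∫⁻ x, d k * g k x ∂μ := lintegral_tsum fun k => (hg k).const_mul _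
    _ = ∑' k, d k * ∫⁻ x, g k x ∂μ := by simp_rw [lintegral_const_mul'' _ (hg _)]

section Cutoff

variable {χ : ℝ → ℝ} {a ρ : ℝ}

theorem exists_mul_apply_le_div_pow_mul_apply (hχ_range : ∀ x, χ x ∈ Set.Icc (0 : ℝ) 1)
    (hχ_one : ∀ x ∈ Set.Icc (0 : ℝ) a, χ x = 1) (ha : 0 < a) (hρ : 0 < ρ) (hρ1 : ρ < 1)
    {s : ℝ} (hs : 0 < s) :
    ∃ k : ℕ, a * ρ * χ s ≤ s / ρ ^ k * χ (s / ρ ^ k) := by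
  have haρ : a * ρ ≤ a := mul_le_of_le_one_right ha.le hρ1.le
  rcases lt_or_ge a s with has | hsa
  · exact ⟨0, by simpa using mul_le_mul_of_nonneg_right (haρ.trans has.le) (hχ_range s).1⟩
  obtain ⟨k, hk_lt, hk_le⟩ :=
    exists_nat_pow_near_of_lt_one (div_pos hs ha) ((div_le_one ha).2 hsa) hρ hρ1
  have hρk : 0 < ρ ^ k := pow_pos hρ k
  have h_one : χ (s / ρ ^ k) = 1 :=
    hχ_one _ ⟨by positivity, (div_le_iff₀ hρk).2 (by linarith [(div_le_iff₀ ha).1 hk_le])⟩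
  have h_gt : a * ρ < s / ρ ^ k := by
    rw [pow_succ, lt_div_iff₀ ha] at hk_lt
    rw [lt_div_iff₀ hρk]
    linarith
  refine ⟨k, ?_⟩
  rw [h_one, mul_one]
  exact (mul_le_of_le_one_right (by positivity) (hχ_range s).2).trans h_gt.le

theorem exists_sq_mul_apply_sq_le (hχ_range : ∀ x, χ x ∈ Set.Icc (0 : ℝ) 1)
    (hχ_one : ∀ x ∈ Set.Icc (0 : ℝ) a, χ x = 1) (ha : 0 < a) (hρ : 0 < ρ) (hρ1 : ρ < 1)
    {t : ℝ} (ht : 0 < t) (n : ℕ) :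
    ∃ k : ℕ, (a * ρ) ^ 2 * χ (t / ρ ^ n) ^ 2 ≤
      (ρ ^ (2 * (n + k)))⁻¹ * (t ^ 2 * χ (t / ρ ^ (n + k)) ^ 2) := by
  obtain ⟨k, hk⟩ := exists_mul_apply_le_div_pow_mul_apply hχ_range hχ_one ha hρ hρ1
    (div_pos ht (pow_pos hρ n))
  rw [div_div, ← pow_add] at hk
  refine ⟨k, ?_⟩
  have hρnk : ρ ^ (n + k) ≠ 0 := (pow_pos hρ _).ne'
  calc (a * ρ) ^ 2 * χ (t / ρ ^ n) ^ 2 = (a * ρ * χ (t / ρ ^ n)) ^ 2 := by ring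
    _ ≤ (t / ρ ^ (n + k) * χ (t / ρ ^ (n + k))) ^ 2 :=
      pow_le_pow_left₀ (mul_nonneg (by positivity) (hχ_range _).1) hk 2
    _ = _ := by rw [pow_mul']; field_simp

end Cutoff

theorem spectral_cutoff_L2_inequality_general
    {X : Type*} [MeasurableSpace X] (μ : Measure X)
    (f : X → ℝ) (hf_meas : Measurable f) (hf_nonneg : ∀ x, 0 ≤ f x)
    (χ : ℝ → ℝ) (a : ℝ)
    (hχ_meas : Measurable χ)
    (hχ_range : ∀ x, χ x ∈ Set.Icc (0 : ℝ) 1)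
    (hχ_one : ∀ x ∈ Set.Icc (0 : ℝ) a, χ x = 1)
    (ha : 0 < a) (ha1 : a ≤ 1)
    (ρ : ℝ) (hρ : 0 < ρ) (hρa : ρ < a)
    (ψ : X → ℂ) (hψ : MemLp ψ 2 μ)
    (hψ_zero : ∀ᵐ x ∂μ, f x = 0 → ψ x = 0)
    (n : ℕ) :
    ENNReal.ofReal ((a * ρ) ^ 2) *
        ∫⁻ x, ENNReal.ofReal (χ (f x / ρ ^ n) ^ 2 * ‖ψ x‖ ^ 2) ∂μ ≤
      ∑' k : ℕ,
        ENNReal.ofReal ((ρ ^ (2 * (n + k)))⁻¹) *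
          ∫⁻ x, ENNReal.ofReal (f x ^ 2 * χ (f x / ρ ^ (n + k)) ^ 2 * ‖ψ x‖ ^ 2) ∂μ := by
  have hψ_meas : AEMeasurable ψ μ := hψ.aestronglyMeasurable.aemeasurable
  refine const_mul_lintegral_le_tsum_const_mul_lintegral (fun k => by fun_prop) ?_
  filter_upwards [hψ_zero] with x hx
  rcases (hf_nonneg x).eq_or_lt with hfx | hfx
  · exact ⟨0, by simp [hx hfx.symm]⟩
  obtain ⟨k, hk⟩ := exists_sq_mul_apply_sq_le hχ_range hχ_one ha hρ (hρa.trans_le ha1) hfx n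
  refine ⟨k, ?_⟩
  rw [← ENNReal.ofReal_mul (by positivity), ← ENNReal.ofReal_mul (by positivity)]
  exact ENNReal.ofReal_le_ofReal
    (by linear_combination mul_le_mul_of_nonneg_right hk (sq_nonneg ‖ψ x‖))

/-- **Inequality (5) (ineq:T_01)** of Hasler–Herbst, "Uniqueness of the ground state
in the Feshbach renormalization analysis", in the multiplication-operator
realization of the self-adjoint operator `T₀` as multiplication by a measurable
function `f ≥ 0` on `L²(μ)`.

Let `χ : ℝ → [0,1]` be a cutoff function with parameter `a ∈ (0,1]` (a Borel
function, nonincreasing on `[0,∞)`, equal to `1` on `[0,a]` and to `0` on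
`[1,∞)`), let `ρ ∈ (0,a)`, and let `ψ ∈ L²(μ;ℂ)` vanish `μ`-a.e. on `f⁻¹({0})`.
Then for every `n ∈ ℕ`,

`(aρ)² ∫ χ(f(x)/ρⁿ)² |ψ(x)|² dμ ≤ Σ_{j=n}^∞ ρ^{-2j} ∫ f(x)² χ(f(x)/ρ^j)² |ψ(x)|² dμ`,

both sides taken in `[0,∞]` (the sum is reindexed by `j = n + k`, `k ∈ ℕ`). -/
theorem spectral_cutoff_L2_inequality
    {X : Type*} [MeasurableSpace X] (μ : Measure X)
    (f : X → ℝ) (hf_meas : Measurable f) (hf_nonneg : ∀ x, 0 ≤ f x)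
    (χ : ℝ → ℝ) (a : ℝ)
    (hχ_meas : Measurable χ)
    (hχ_range : ∀ x, χ x ∈ Set.Icc (0 : ℝ) 1)
    (hχ_anti : AntitoneOn χ (Set.Ici (0 : ℝ)))
    (hχ_one : ∀ x ∈ Set.Icc (0 : ℝ) a, χ x = 1)
    (hχ_zero : ∀ x : ℝ, 1 ≤ x → χ x = 0)
    (ha : 0 < a) (ha1 : a ≤ 1)
    (ρ : ℝ) (hρ : 0 < ρ) (hρa : ρ < a)
    (ψ : X → ℂ) (hψ : MemLp ψ 2 μ)
    (hψ_zero : ∀ᵐ x ∂μ, f x = 0 → ψ x = 0)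
    (n : ℕ) :
    ENNReal.ofReal ((a * ρ) ^ 2) *
        ∫⁻ x, ENNReal.ofReal (χ (f x / ρ ^ n) ^ 2 * ‖ψ x‖ ^ 2) ∂μ ≤
      ∑' k : ℕ,
        ENNReal.ofReal ((ρ ^ (2 * (n + k)))⁻¹) *
          ∫⁻ x, ENNReal.ofReal (f x ^ 2 * χ (f x / ρ ^ (n + k)) ^ 2 * ‖ψ x‖ ^ 2) ∂μ :=
  spectral_cutoff_L2_inequality_general μ f hf_meas hf_nonneg χ a hχ_meas hχ_range hχ_one ha ha1 ρ
    hρ hρa ψ hψ hψ_zero n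
end

section
/- Let (X,μ) be a measure space, f : X → [0,∞) measurable, and for a bounded Borel function φ : ℝ → ℂ let φ(T₀) denote the bounded operator on L²(μ;ℂ) of multiplication by φ∘f. Let Γ : (0,∞) → U(L²(μ;ℂ)) satisfy Γ_s Γ_u = Γ_{su} for all s,u > 0 and the scaling law Γ_s φ(T₀) Γ_s^{-1} = (x ↦ φ(s·x))(T₀) for every s > 0 and every bounded Borel φ. Let χ : ℝ → [0,1] be a cutoff function with parameter a ∈ (0,1] and let ρ ∈ (0,a). Then for every n ≥ 1, ( Γ_ρ χ_ρ(T₀) )^n = Γ_{ρ^n} χ_{ρ^n}(T₀), where χ_t(T₀) denotes multiplication by χ(f/t). -/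
open MeasureTheory

/-!
Since `ρ < a`, the cutoff `χ_ρⁿ⁺¹` lives where `χ_ρⁿ ≡ 1`, so `χ_ρⁿ⁺¹ χ_ρⁿ = χ_ρⁿ⁺¹`.
Induct on `n`: the scaling law moves `χ_ρ(T₀)` across `Γ_ρⁿ` as `χ_ρⁿ⁺¹(T₀)`, the group law
merges `Γ_ρ Γ_ρⁿ = Γ_ρⁿ⁺¹`, and the product identity absorbs `χ_ρⁿ(T₀)`.
-/

def BoundedBorel (φ : ℝ → ℂ) : Prop :=
  Measurable φ ∧ ∃ C : ℝ, ∀ x, ‖φ x‖ ≤ C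

theorem boundedBorel_ofReal_comp_div {χ : ℝ → ℝ} (hχ_meas : Measurable χ)
    (hχ_range : ∀ x, χ x ∈ Set.Icc (0 : ℝ) 1) (t : ℝ) :
    BoundedBorel fun x => (χ (x / t) : ℂ) := by
  refine ⟨by fun_prop, 1, fun x => ?_⟩
  rw [Complex.norm_real, Real.norm_eq_abs, abs_le]
  exact ⟨by linarith [(hχ_range (x / t)).1], (hχ_range _).2⟩

theorem cutoff_div_mul_cutoff_div {χ : ℝ → ℝ} {a s t y : ℝ}
    (hχ_one : ∀ x ∈ Set.Icc (0 : ℝ) a, χ x = 1) (hχ_zero : ∀ x : ℝ, 1 ≤ x → χ x = 0)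
    (ht : 0 < t) (hs : 0 < s) (hts : t ≤ a * s) (hy : 0 ≤ y) :
    χ (y / t) * χ (y / s) = χ (y / t) := by
  by_cases hzero : χ (y / t) = 0
  · rw [hzero, zero_mul]
  have hyt : y < t := by
    by_contra! hty
    exact hzero (hχ_zero _ ((one_le_div ht).2 hty))
  have hys : y / s ≤ a := by
    rw [div_le_iff₀ hs]
    linarith
  rw [hχ_one _ ⟨div_nonneg hy hs.le, hys⟩, mul_one]

theorem mul_op_mul_op_eq_of_mul_eq {X : Type*} [MeasurableSpace X] {μ : Measure X}
    {f : X → ℝ} {Mop : (ℝ → ℂ) → (Lp ℂ 2 μ →L[ℂ] Lp ℂ 2 μ)}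
    (hMop : ∀ φ : ℝ → ℂ, Measurable φ → (∃ C : ℝ, ∀ x, ‖φ x‖ ≤ C) →
      ∀ ψ : Lp ℂ 2 μ, (Mop φ ψ : X → ℂ) =ᵐ[μ] fun x => φ (f x) * ψ x)
    {φ φ' φ'' : ℝ → ℂ} (hφ : BoundedBorel φ) (hφ' : BoundedBorel φ')
    (hφ'' : BoundedBorel φ'') (hmul : ∀ x, φ (f x) * φ' (f x) = φ'' (f x))
    (ψ : Lp ℂ 2 μ) :
    Mop φ (Mop φ' ψ) = Mop φ'' ψ := by
  apply Lp.ext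
  filter_upwards [hMop φ hφ.1 hφ.2 (Mop φ' ψ), hMop φ' hφ'.1 hφ'.2 ψ,
    hMop φ'' hφ''.1 hφ''.2 ψ] with x h h' h''
  rw [h, h', h'', ← mul_assoc, hmul]

theorem scale_cutoff_composition_law_general
    {X : Type*} [MeasurableSpace X] (μ : Measure X)
    (f : X → ℝ) (hf_nonneg : ∀ x, 0 ≤ f x)
    (Mop : (ℝ → ℂ) → (Lp ℂ 2 μ →L[ℂ] Lp ℂ 2 μ))
    (hMop : ∀ φ : ℝ → ℂ, Measurable φ → (∃ C : ℝ, ∀ x, ‖φ x‖ ≤ C) →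
      ∀ ψ : Lp ℂ 2 μ, (Mop φ ψ : X → ℂ) =ᵐ[μ] fun x => φ (f x) * ψ x)
    (Γ : ℝ → (Lp ℂ 2 μ ≃ₗᵢ[ℂ] Lp ℂ 2 μ))
    (hΓ_grp : ∀ s u : ℝ, 0 < s → 0 < u → ∀ ψ : Lp ℂ 2 μ, Γ s (Γ u ψ) = Γ (s * u) ψ)
    (hΓ_scale : ∀ s : ℝ, 0 < s → ∀ φ : ℝ → ℂ, Measurable φ → (∃ C : ℝ, ∀ x, ‖φ x‖ ≤ C) →
      ∀ ψ : Lp ℂ 2 μ, Γ s (Mop φ ((Γ s).symm ψ)) = Mop (fun x => φ (s * x)) ψ)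
    (χ : ℝ → ℝ) (a : ℝ)
    (hχ_meas : Measurable χ)
    (hχ_range : ∀ x, χ x ∈ Set.Icc (0 : ℝ) 1)
    (hχ_one : ∀ x ∈ Set.Icc (0 : ℝ) a, χ x = 1)
    (hχ_zero : ∀ x : ℝ, 1 ≤ x → χ x = 0)
    (ρ : ℝ) (hρ : 0 < ρ) (hρa : ρ < a)
    (n : ℕ) (hn : 1 ≤ n) (ψ : Lp ℂ 2 μ) :
    (fun v => Γ ρ (Mop (fun x => (χ (x / ρ) : ℂ)) v))^[n] ψ =
      Γ (ρ ^ n) (Mop (fun x => (χ (x / ρ ^ n) : ℂ)) ψ) := by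
  have hχ := boundedBorel_ofReal_comp_div hχ_meas hχ_range
  induction n, hn using Nat.le_induction with
  | base => simp only [Function.iterate_one, pow_one]
  | succ m _ ih =>
    have hρm : 0 < ρ ^ m := pow_pos hρ m
    have hscale : ∀ w, Mop (fun x => (χ (x / ρ) : ℂ)) (Γ (ρ ^ m) w) =
        Γ (ρ ^ m) (Mop (fun x => (χ (x / ρ ^ (m + 1)) : ℂ)) w) := fun w => by
      rw [← (Γ (ρ ^ m)).symm_apply_apply w, hΓ_scale _ hρm _ (hχ _).1 (hχ _).2,
        LinearIsometryEquiv.symm_apply_apply]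
      simp only [pow_succ, mul_div_mul_left _ _ hρm.ne']
    have hcut : Mop (fun x => (χ (x / ρ ^ (m + 1)) : ℂ))
        (Mop (fun x => (χ (x / ρ ^ m) : ℂ)) ψ) = Mop (fun x => (χ (x / ρ ^ (m + 1)) : ℂ)) ψ := by
      refine mul_op_mul_op_eq_of_mul_eq hMop (hχ _) (hχ _) (hχ _) (fun x => ?_) ψ
      exact_mod_cast cutoff_div_mul_cutoff_div hχ_one hχ_zero (pow_pos hρ _) hρm
        (by rw [pow_succ']; gcongr) (hf_nonneg x)
    rw [Function.iterate_succ_apply', ih, hscale, hΓ_grp ρ _ hρ hρm, ← pow_succ', hcut]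

/-- **Composition law for scale transformations and cutoffs**, used in the proof of the
main abstract theorem of Hasler–Herbst, "Uniqueness of the ground state in the Feshbach
renormalization analysis": `(Γ_ρ χ_ρ(T₀))^n = Γ_{ρⁿ} χ_{ρⁿ}(T₀)`.

Here the self-adjoint operator `T₀` is realized, via the spectral theorem, as
multiplication by a measurable function `f ≥ 0` on `L²(μ;ℂ)`; for a bounded Borel
function `φ : ℝ → ℂ`, `φ(T₀)` is the bounded operator `Mop φ` of multiplication by
`φ∘f`.  The unitaries `Γ_s` (`s > 0`) satisfy the group law `Γ_s Γ_u = Γ_{su}` and the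
scaling law `Γ_s φ(T₀) Γ_s⁻¹ = (x ↦ φ(s·x))(T₀)` for all bounded Borel `φ`.  The
function `χ` is a cutoff function with parameter `a ∈ (0,1]`, and `ρ ∈ (0,a)`. -/
theorem scale_cutoff_composition_law
    {X : Type*} [MeasurableSpace X] (μ : Measure X)
    (f : X → ℝ) (hf_meas : Measurable f) (hf_nonneg : ∀ x, 0 ≤ f x)
    (Mop : (ℝ → ℂ) → (Lp ℂ 2 μ →L[ℂ] Lp ℂ 2 μ))
    (hMop : ∀ φ : ℝ → ℂ, Measurable φ → (∃ C : ℝ, ∀ x, ‖φ x‖ ≤ C) →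
      ∀ ψ : Lp ℂ 2 μ, (Mop φ ψ : X → ℂ) =ᵐ[μ] fun x => φ (f x) * ψ x)
    (Γ : ℝ → (Lp ℂ 2 μ ≃ₗᵢ[ℂ] Lp ℂ 2 μ))
    (hΓ_grp : ∀ s u : ℝ, 0 < s → 0 < u → ∀ ψ : Lp ℂ 2 μ, Γ s (Γ u ψ) = Γ (s * u) ψ)
    (hΓ_scale : ∀ s : ℝ, 0 < s → ∀ φ : ℝ → ℂ, Measurable φ → (∃ C : ℝ, ∀ x, ‖φ x‖ ≤ C) →
      ∀ ψ : Lp ℂ 2 μ, Γ s (Mop φ ((Γ s).symm ψ)) = Mop (fun x => φ (s * x)) ψ)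
    (χ : ℝ → ℝ) (a : ℝ)
    (hχ_meas : Measurable χ)
    (hχ_range : ∀ x, χ x ∈ Set.Icc (0 : ℝ) 1)
    (hχ_anti : AntitoneOn χ (Set.Ici (0 : ℝ)))
    (hχ_one : ∀ x ∈ Set.Icc (0 : ℝ) a, χ x = 1)
    (hχ_zero : ∀ x : ℝ, 1 ≤ x → χ x = 0)
    (ha : 0 < a) (ha1 : a ≤ 1)
    (ρ : ℝ) (hρ : 0 < ρ) (hρa : ρ < a)
    (n : ℕ) (hn : 1 ≤ n) (ψ : Lp ℂ 2 μ) :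
    (fun v => Γ ρ (Mop (fun x => (χ (x / ρ) : ℂ)) v))^[n] ψ =
      Γ (ρ ^ n) (Mop (fun x => (χ (x / ρ ^ n) : ℂ)) ψ) :=
  scale_cutoff_composition_law_general μ f hf_nonneg Mop hMop Γ hΓ_grp hΓ_scale χ a hχ_meas hχ_range
    hχ_one hχ_zero ρ hρ hρa n hn ψ
end
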